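/- arXiv:2507.10168 — 2 statements merged into one kernel-verified Lean document; each statement's English description precedes it below -/
import Mathlib

section
/- Let S be a left cancellative monoid which is C*-regular on the boundary and which satisfies the following condition: for every g ∈ I_ℓ(S) and all X, X_1, …, X_m ∈ J(S) with X_i ⊆ X for all i such that X ∖ (X_1 ∪ ⋯ ∪ X_m) ⊆ dom g and g s = s for every s ∈ X ∖ (X_1 ∪ ⋯ ∪ X_m), there exist Y_1, …, Y_l ∈ J(S) (possibly l = 0), each fixed pointwise by g, such that {X_1, …, X_m, Y_1, …, Y_l} is a foundation set for X. Then S is strongly C*-regular on the boundary. -/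
open scoped Classical

namespace SgC

variable {M : Type*}

/-- Composition of partial maps (`g` after `f`). -/
def pcomp (g f : M → Option M) : M → Option M := fun s => (f s).bind g

/-- The canonical partial inverse of a partial map (the genuine inverse when the map
is injective on its domain, as is the case for all maps in the left inverse hull of a
left cancellative monoid). -/
noncomputable def pinv (f : M → Option M) : M → Option M :=
  fun t => if h : ∃ s, f s = some t then some h.choose else none

/-- Left translation `t ↦ s * t` as an everywhere-defined partial map. -/
def ptransl [Mul M] (s : M) : M → Option M := fun t => some (s * t)

/-- The identity partial map. -/
def pid : M → Option M := fun s => some s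

/-- The block `q⁻¹ ∘ p`: first multiply on the left by `p`, then remove `q` on the left. -/
noncomputable def pblock [Mul M] (p : M × M) : M → Option M :=
  pcomp (pinv (ptransl p.2)) (ptransl p.1)

/-- Membership in the left inverse hull `I_ℓ(M)`: `h` is of the form
`s₂ₙ⁻¹ s₂ₙ₋₁ ⋯ s₂⁻¹ s₁` for some `n ≥ 1` and `sᵢ ∈ M` (the list records the pairs
`(s₁,s₂), (s₃,s₄), …`, applied left to right). -/
def InInvHull [Mul M] (h : M → Option M) : Prop :=
  ∃ l : List (M × M), l ≠ [] ∧
    h = l.foldl (fun acc p => pcomp (pblock p) acc) pid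

/-- Membership in the inverse hull generated by translations by elements of `σ` only
(used for canonical copies of `I_ℓ(S)` inside partial maps of a larger monoid). -/
def InInvHullOn [Mul M] (σ : Set M) (h : M → Option M) : Prop :=
  ∃ l : List (M × M), l ≠ [] ∧ (∀ p ∈ l, p.1 ∈ σ ∧ p.2 ∈ σ) ∧
    h = l.foldl (fun acc p => pcomp (pblock p) acc) pid

/-- Domain of a partial map. -/
def pdom (h : M → Option M) : Set M := {s | h s ≠ none}

/-- `h` fixes the set `Y` pointwise (in particular `Y ⊆ dom h`). -/
def PFixes (h : M → Option M) (Y : Set M) : Prop := ∀ s ∈ Y, h s = some s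

/-- Preimage of a set under a partial map. -/
def ppre (h : M → Option M) (X : Set M) : Set M := {s | ∃ x ∈ X, h s = some x}

/-- Constructible right ideals: domains of elements of the left inverse hull. -/
def IsConstructible [Mul M] (X : Set M) : Prop := ∃ h, InInvHull h ∧ X = pdom h

/-- Membership in `J̄(S)`: sets of the form `X₀` or `X₀ ∖ (X₁ ∪ ⋯ ∪ Xₘ)` with all
`Xᵢ` constructible. -/
def IsConstructibleBar [Mul M] (X : Set M) : Prop :=
  ∃ (X₀ : Set M) (m : ℕ) (Xi : Fin m → Set M),
    IsConstructible X₀ ∧ (∀ i, IsConstructible (Xi i)) ∧ X = X₀ \ ⋃ i, Xi i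

/-- `Xi` is a foundation family for `X`: each `Xi i ⊆ X` and every nonempty
constructible right ideal contained in `X` intersects some `Xi i`. -/
def IsFoundation [Mul M] (X : Set M) {ι : Type*} (Xi : ι → Set M) : Prop :=
  (∀ i, Xi i ⊆ X) ∧
  ∀ Y : Set M, IsConstructible Y → Y.Nonempty → Y ⊆ X → ∃ i, (Y ∩ Xi i).Nonempty

/-- Strong C*-regularity. -/
def StronglyRegular (M : Type*) [Monoid M] : Prop :=
  ∀ (n : ℕ) (h : Fin n → M → Option M), (∀ k, InInvHull (h k)) →
  ∀ (m : ℕ) (X : Set M) (Xi : Fin m → Set M),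
    IsConstructible X → (∀ i, IsConstructible (Xi i)) →
    (X \ ⋃ i, Xi i).Nonempty →
    (X \ ⋃ i, Xi i) ⊆ ⋃ k, {s | h k s = some s} →
    ∃ (l : ℕ) (Y : Fin l → Set M) (kk : Fin l → Fin n),
      (∀ j, IsConstructible (Y j)) ∧
      (X \ ⋃ i, Xi i) ⊆ ⋃ j, Y j ∧
      ∀ j, PFixes (h (kk j)) (Y j)

/-- C*-regularity. -/
def Regular (M : Type*) [Monoid M] : Prop :=
  ∀ (n : ℕ) (h : Fin n → M → Option M), (∀ k, InInvHull (h k)) →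
  ∀ X : Set M, IsConstructibleBar X → X.Nonempty →
    X ⊆ ⋃ k, {s | h k s = some s} →
    ∃ (l : ℕ) (Y : Fin l → Set M) (kk : Fin l → Fin n),
      (∀ j, IsConstructibleBar (Y j)) ∧ X ⊆ ⋃ j, Y j ∧
      ∀ j, PFixes (h (kk j)) (Y j)

/-- Strong C*-regularity on the boundary. -/
def StronglyRegularOnBoundary (M : Type*) [Monoid M] : Prop :=
  ∀ (n : ℕ) (h : Fin n → M → Option M), (∀ k, InInvHull (h k)) →
  ∀ (m : ℕ) (X : Set M) (Xi : Fin m → Set M),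
    IsConstructible X → (∀ i, IsConstructible (Xi i)) → (∀ i, Xi i ⊆ X) →
    (X \ ⋃ i, Xi i).Nonempty →
    (X \ ⋃ i, Xi i) ⊆ ⋃ k, {s | h k s = some s} →
    ∃ (l : ℕ) (Y : Fin l → Set M) (kk : Fin l → Fin n),
      (∀ j, IsConstructible (Y j)) ∧ (∀ j, PFixes (h (kk j)) (Y j)) ∧
      IsFoundation X (Sum.elim Xi Y)

/-- C*-regularity on the boundary. -/
def RegularOnBoundary (M : Type*) [Monoid M] : Prop :=
  ∀ (n : ℕ) (h : Fin n → M → Option M), (∀ k, InInvHull (h k)) →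
  ∀ (m : ℕ) (X : Set M) (Xi : Fin m → Set M),
    IsConstructible X → (∀ i, IsConstructible (Xi i)) → (∀ i, Xi i ⊆ X) →
    (X \ ⋃ i, Xi i).Nonempty →
    (X \ ⋃ i, Xi i) ⊆ ⋃ k, {s | h k s = some s} →
    ∃ (l : ℕ) (Y : Fin l → Set M) (kk : Fin l → Fin n),
      (∀ j, IsConstructibleBar (Y j)) ∧ (∀ j, PFixes (h (kk j)) (Y j)) ∧
      IsFoundation X (Sum.elim Xi Y)

/-- The type of constructible right ideals `J(M)`. -/
def CIdeal (M : Type*) [Mul M] : Type _ := {X : Set M // IsConstructible X}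

/-- The character space `{0,1}^{J(M)}` with the topology of pointwise convergence. -/
abbrev CharSpace (M : Type*) [Mul M] : Type _ := CIdeal M → Bool

/-- The principal character `χ_s`. -/
noncomputable def princhar [Mul M] (s : M) : CharSpace M :=
  fun X => decide (s ∈ X.1)

/-- `Ω(M)`: the closure of the set of principal characters. -/
noncomputable def Omega (M : Type*) [Mul M] : Set (CharSpace M) :=
  closure (Set.range (princhar : M → CharSpace M))

/-- Filters on `J(M)`: nonempty collections of nonempty constructible ideals closed
under intersections and enlargements within `J(M)`. -/
def IsFilterOn [Mul M] (F : Set (CIdeal M)) : Prop :=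
  F.Nonempty ∧ (∀ X ∈ F, (X.1 : Set M).Nonempty) ∧
  (∀ X ∈ F, ∀ Y ∈ F, ∀ Z : CIdeal M, Z.1 = X.1 ∩ Y.1 → Z ∈ F) ∧
  (∀ X ∈ F, ∀ Y : CIdeal M, X.1 ⊆ Y.1 → Y ∈ F)

/-- Nonzero multiplicative `{0,1}`-valued maps on `J(M)`. -/
def IsChar [Mul M] (χ : CharSpace M) : Prop :=
  (∃ X, χ X = true) ∧
  ∀ X Y Z : CIdeal M, Z.1 = X.1 ∩ Y.1 → χ Z = (χ X && χ Y)

/-- Maximal characters: characters whose associated filter is maximal among filters. -/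
def IsMaximalChar [Mul M] (χ : CharSpace M) : Prop :=
  IsChar χ ∧ IsFilterOn {X | χ X = true} ∧
  ∀ G : Set (CIdeal M), IsFilterOn G → {X | χ X = true} ⊆ G → G = {X | χ X = true}

/-- The set of maximal characters `Ω_max(M)`. -/
def OmegaMax (M : Type*) [Mul M] : Set (CharSpace M) := {χ | IsMaximalChar χ}

/-- The boundary `∂Ω(M)`: the closure of the set of maximal characters. -/
noncomputable def BoundaryOmega (M : Type*) [Mul M] : Set (CharSpace M) :=
  closure (OmegaMax M)


/-!
Regularity on the boundary covers `X ∖ ⋃ Xᵢ`, up to a foundation set, by sets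
`Yⱼ = Bⱼ ∖ ⋃ Cⱼ ∈ J̄(S)` each fixed by some `h_k`; the hypothesis, applied to `Bⱼ` and the `Cⱼᵢ`,
yields constructible `Wⱼᵣ` fixed by the same `h_k` with `{Cⱼ, Wⱼ}` a foundation set for `Bⱼ`.
The `Xᵢ` together with the `Wⱼᵣ ∩ X` then form a foundation set for `X`: a nonempty constructible
`V ⊆ X` missing all of them can be shrunk, one `j` at a time, to a nonempty constructible ideal
missing `Yⱼ` (if `V` meets `Bⱼ`, then `V ∩ Bⱼ` meets some `Cⱼᵢ`, and `V ∩ Cⱼᵢ` misses `Yⱼ`), and the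
result contradicts `{Xᵢ, Yⱼ}` being a foundation set for `X`. Shrinking stays inside `J(S)` because
`I_ℓ(S)` is closed under composition and contains a partial inverse of each of its elements.
-/

theorem pcomp_assoc (f g k : M → Option M) :
    pcomp k (pcomp g f) = pcomp (pcomp k g) f := by
  funext s
  simp only [pcomp]
  cases f s <;> rfl

noncomputable def blockComp [Mul M] (l : List (M × M)) : M → Option M :=
  l.foldl (fun acc p => pcomp (pblock p) acc) pid

theorem foldl_pcomp_pblock [Mul M] (l : List (M × M)) (a : M → Option M) :
    l.foldl (fun acc p => pcomp (pblock p) acc) a = pcomp (blockComp l) a := by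
  induction l generalizing a with
  | nil => funext s; show a s = (a s).bind pid; cases a s <;> rfl
  | cons p l ih =>
    change l.foldl _ (pcomp (pblock p) a) = pcomp (l.foldl _ (pcomp (pblock p) pid)) a
    rw [ih, ih, pcomp_assoc]
    rfl

theorem blockComp_append [Mul M] (l₁ l₂ : List (M × M)) :
    blockComp (l₁ ++ l₂) = pcomp (blockComp l₂) (blockComp l₁) := by
  rw [blockComp, List.foldl_append, foldl_pcomp_pblock]
  rfl

theorem InInvHull.pcomp [Mul M] {f g : M → Option M} (hg : InInvHull g) (hf : InInvHull f) :
    InInvHull (pcomp g f) := by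
  obtain ⟨l₁, hl₁, rfl⟩ := hf
  obtain ⟨l₂, -, rfl⟩ := hg
  exact ⟨l₁ ++ l₂, by simp [hl₁], (blockComp_append l₁ l₂).symm⟩

theorem pinv_ptransl_eq_some [Mul M] [IsLeftCancelMul M] {a s t : M} :
    pinv (ptransl a) t = some s ↔ a * s = t := by
  have hspec : ∀ h : ∃ s, ptransl a s = some t, a * h.choose = t :=
    fun h => Option.some.inj h.choose_spec
  unfold pinv
  split_ifs with h
  · exact ⟨fun hs => Option.some.inj hs ▸ hspec h,
      fun hs => congrArg some (mul_left_cancel ((hspec h).trans hs.symm))⟩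
  · exact ⟨nofun, fun hs => (h ⟨s, congrArg some hs⟩).elim⟩

theorem pblock_eq_some [Mul M] [IsLeftCancelMul M] {p : M × M} {s t : M} :
    pblock p s = some t ↔ p.2 * t = p.1 * s :=
  pinv_ptransl_eq_some

theorem blockComp_reverse_map_swap [Mul M] [IsLeftCancelMul M] {l : List (M × M)} {s t : M}
    (h : blockComp l s = some t) : blockComp (l.reverse.map Prod.swap) t = some s := by
  induction l generalizing s with
  | nil => exact (Option.some.inj h).symm ▸ rfl
  | cons p l ih =>
    rw [← List.singleton_append, blockComp_append] at h
    obtain ⟨u, hu, hut⟩ := Option.bind_eq_some_iff.mp h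
    rw [List.reverse_cons, List.map_append, blockComp_append]
    refine Option.bind_eq_some_iff.mpr ⟨u, ih hut, ?_⟩
    exact pblock_eq_some.mpr (pblock_eq_some.mp hu).symm

theorem InInvHull.exists_leftInverse [Mul M] [IsLeftCancelMul M] {f : M → Option M}
    (hf : InInvHull f) : ∃ f', InInvHull f' ∧ ∀ s t, f s = some t → f' t = some s := by
  obtain ⟨l, hl, rfl⟩ := hf
  exact ⟨blockComp (l.reverse.map Prod.swap), ⟨_, by simpa using hl, rfl⟩,
    fun _ _ => blockComp_reverse_map_swap⟩

theorem IsConstructible.inter [Mul M] [IsLeftCancelMul M] {A B : Set M}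
    (hA : IsConstructible A) (hB : IsConstructible B) : IsConstructible (A ∩ B) := by
  obtain ⟨f, hf, rfl⟩ := hA
  obtain ⟨g, hg, rfl⟩ := hB
  obtain ⟨f', hf', hf'f⟩ := hf.exists_leftInverse
  refine ⟨pcomp g (pcomp f' f), hg.pcomp (hf'.pcomp hf), ?_⟩
  ext s
  simp only [pdom, Set.mem_inter_iff, Set.mem_ofPred_eq, pcomp]
  cases hfs : f s with
  | none => simp
  | some t => simp [hf'f s t hfs]

theorem IsConstructibleBar.exists_eq_diff [Mul M] [IsLeftCancelMul M] {Y : Set M}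
    (hY : IsConstructibleBar Y) :
    ∃ (B : Set M) (m : ℕ) (C : Fin m → Set M), IsConstructible B ∧
      (∀ i, IsConstructible (C i)) ∧ (∀ i, C i ⊆ B) ∧ Y = B \ ⋃ i, C i := by
  obtain ⟨B, m, C, hB, hC, rfl⟩ := hY
  refine ⟨B, m, fun i => C i ∩ B, hB, fun i => (hC i).inter hB,
    fun i => Set.inter_subset_right, ?_⟩
  rw [← Set.iUnion_inter, Set.sdiff_inter_self_eq_sdiff]

theorem IsFoundation.exists_subset_disjoint_diff [Mul M] [IsLeftCancelMul M]
    {B V : Set M} {ι κ : Type*} {C : ι → Set M} {W : κ → Set M}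
    (hBCW : IsFoundation B (Sum.elim C W)) (hB : IsConstructible B)
    (hC : ∀ i, IsConstructible (C i)) (hV : IsConstructible V) (hne : V.Nonempty)
    (hVW : ∀ r, Disjoint V (W r)) :
    ∃ V' ⊆ V, IsConstructible V' ∧ V'.Nonempty ∧ Disjoint V' (B \ ⋃ i, C i) := by
  by_cases hVB : (V ∩ B).Nonempty
  · obtain ⟨i | r, hmeet⟩ := hBCW.2 _ (hV.inter hB) hVB Set.inter_subset_right
    · refine ⟨V ∩ C i, Set.inter_subset_left, hV.inter (hC i), ?_, ?_⟩
      · exact hmeet.mono fun x hx => ⟨hx.1.1, hx.2⟩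
      · exact Set.disjoint_left.mpr fun x hx hxB => hxB.2 (Set.mem_iUnion.mpr ⟨i, hx.2⟩)
    · exact (Set.not_disjoint_iff_nonempty_inter.mpr
        (hmeet.mono fun x hx => ⟨hx.1.1, hx.2⟩) (hVW r)).elim
  · exact ⟨V, subset_rfl, hV, hne, Set.disjoint_left.mpr fun x hxV hx => hVB ⟨x, hxV, hx.1⟩⟩

theorem exists_constructible_subset_disjoint [Mul M] {ι : Type*} [Fintype ι] (Y : ι → Set M)
    {V : Set M} (hV : IsConstructible V) (hne : V.Nonempty)
    (hshrink : ∀ j, ∀ V' ⊆ V, IsConstructible V' → V'.Nonempty →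
      ∃ V'' ⊆ V', IsConstructible V'' ∧ V''.Nonempty ∧ Disjoint V'' (Y j)) :
    ∃ V' ⊆ V, IsConstructible V' ∧ V'.Nonempty ∧ ∀ j, Disjoint V' (Y j) := by
  classical
  suffices ∀ s : Finset ι,
      ∃ V' ⊆ V, IsConstructible V' ∧ V'.Nonempty ∧ ∀ j ∈ s, Disjoint V' (Y j) by
    obtain ⟨V', hV'V, hV', hne', hdisj⟩ := this Finset.univ
    exact ⟨V', hV'V, hV', hne', fun j => hdisj j (Finset.mem_univ j)⟩
  intro s
  induction s using Finset.induction_on with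
  | empty => exact ⟨V, subset_rfl, hV, hne, by simp⟩
  | insert a s _ ih =>
    obtain ⟨V', hV'V, hV', hne', hdisj⟩ := ih
    obtain ⟨V'', hV''V', hV'', hne'', hdisja⟩ := hshrink a V' hV'V hV' hne'
    refine ⟨V'', hV''V'.trans hV'V, hV'', hne'', ?_⟩
    rintro j hj
    rcases Finset.mem_insert.mp hj with rfl | hj
    · exact hdisja
    · exact (hdisj j hj).mono_left hV''V'

theorem IsFoundation.refine [Mul M] [IsLeftCancelMul M] {X : Set M}
    {ι ι' : Type*} [Fintype ι'] {Xi : ι → Set M} {Y : ι' → Set M}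
    (hfound : IsFoundation X (Sum.elim Xi Y)) {B : ι' → Set M} {mC : ι' → Type*}
    {C : ∀ j, mC j → Set M} (hB : ∀ j, IsConstructible (B j))
    (hC : ∀ j i, IsConstructible (C j i)) (hY : ∀ j, Y j = B j \ ⋃ i, C j i)
    {κ : ι' → Type*} {W : ∀ j, κ j → Set M} (hW : ∀ j, IsFoundation (B j) (Sum.elim (C j) (W j))) :
    IsFoundation X (Sum.elim Xi fun p : Σ j, κ j => W p.1 p.2 ∩ X) := by
  refine ⟨fun | .inl i => hfound.1 (.inl i) | .inr _ => Set.inter_subset_right, ?_⟩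
  intro V hV hne hVX
  by_contra hmiss
  have hdisj : ∀ a, Disjoint V (Sum.elim Xi (fun p : Σ j, κ j => W p.1 p.2 ∩ X) a) :=
    fun a => not_not.mp fun h => hmiss ⟨a, Set.not_disjoint_iff_nonempty_inter.mp h⟩
  have hVW : ∀ j r, Disjoint V (W j r) := fun j r =>
    Set.disjoint_left.mpr fun x hxV hxW => Set.disjoint_left.mp (hdisj (.inr ⟨j, r⟩)) hxV
      ⟨hxW, hVX hxV⟩
  obtain ⟨V', hV'V, hV', hne', hV'Y⟩ := exists_constructible_subset_disjoint Y hV hne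
    fun j V' hV'V hV' hne' => hY j ▸ (hW j).exists_subset_disjoint_diff (hB j) (hC j) hV' hne'
      fun r => (hVW j r).mono_left hV'V
  obtain ⟨i | j, hmeet⟩ := hfound.2 V' hV' hne' (hV'V.trans hVX)
  · exact Set.not_disjoint_iff_nonempty_inter.mpr hmeet ((hdisj (.inl i)).mono_left hV'V)
  · exact Set.not_disjoint_iff_nonempty_inter.mpr hmeet (hV'Y j)

theorem IsFoundation.comp_equiv [Mul M] {X : Set M} {ι κ κ' : Type*} {Xi : ι → Set M}
    {W : κ → Set M} (h : IsFoundation X (Sum.elim Xi W)) (e : κ' ≃ κ) :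
    IsFoundation X (Sum.elim Xi (W ∘ e)) := by
  refine ⟨fun | .inl i => h.1 (.inl i) | .inr r => h.1 (.inr (e r)), ?_⟩
  intro V hV hne hVX
  obtain ⟨i | r, hmeet⟩ := h.2 V hV hne hVX
  · exact ⟨.inl i, hmeet⟩
  · exact ⟨.inr (e.symm r), by simpa using hmeet⟩

/-- If a left cancellative monoid `S` is C*-regular on the boundary
and for every `g ∈ I_ℓ(S)` and constructible `X, X₁, …, Xₘ` with `Xᵢ ⊆ X` such that `g`
fixes `X ∖ (X₁ ∪ ⋯ ∪ Xₘ)` pointwise there are constructible `Y₁, …, Y_l` (possibly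
`l = 0`), each fixed pointwise by `g`, with `{X₁, …, Xₘ, Y₁, …, Y_l}` a foundation set
for `X`, then `S` is strongly C*-regular on the boundary. -/
theorem cstar_stmt7 {M : Type*} [Monoid M] [IsLeftCancelMul M]
    (hreg : RegularOnBoundary M)
    (hcond : ∀ g : M → Option M, InInvHull g →
      ∀ (m : ℕ) (X : Set M) (Xi : Fin m → Set M),
        IsConstructible X → (∀ i, IsConstructible (Xi i)) → (∀ i, Xi i ⊆ X) →
        PFixes g (X \ ⋃ i, Xi i) →
        ∃ (l : ℕ) (Y : Fin l → Set M),
          (∀ j, IsConstructible (Y j)) ∧ (∀ j, PFixes g (Y j)) ∧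
          IsFoundation X (Sum.elim Xi Y)) :
    StronglyRegularOnBoundary M := by
  intro n h hh m X Xi hX hXi hXiX hne hcov
  obtain ⟨l, Y, k, hYbar, hYfix, hfound⟩ := hreg n h hh m X Xi hX hXi hXiX hne hcov
  choose B mC C hB hC hCB hY using fun j => (hYbar j).exists_eq_diff
  choose lW W hW hWfix hWfound using fun j =>
    hcond (h (k j)) (hh _) (mC j) (B j) (C j) (hB j) (hC j) (hCB j) (hY j ▸ hYfix j)
  let e := (Fintype.equivFin (Σ j, Fin (lW j))).symm
  refine ⟨_, fun r => W (e r).1 (e r).2 ∩ X, fun r => k (e r).1,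
    fun r => (hW _ _).inter hX, fun r s hs => hWfix _ _ s hs.1, ?_⟩
  exact (hfound.refine hB hC hY hWfound).comp_equiv e

end SgC
end

section
/- The monoid R is not C*-regular. -/
open scoped Classical

namespace SgC

variable {M : Type*}

/-! ### The monoid `R` -/

/-- Generators of the monoid `R`. -/
inductive Gen : Type
  | a : Gen
  | b : Gen
  | c : Gen
  | d : Gen
  | f : Gen
  | x : ℤ → Gen
  | y : ℤ → Gen

/-- The defining relations of the monoid `R`. -/
inductive RRel : FreeMonoid Gen → FreeMonoid Gen → Prop
  | abx (n : ℤ) : RRel (FreeMonoid.of Gen.a * FreeMonoid.of Gen.b * FreeMonoid.of (Gen.x n))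
      (FreeMonoid.of Gen.b * FreeMonoid.of (Gen.x n))
  | aby (n : ℤ) : RRel (FreeMonoid.of Gen.a * FreeMonoid.of Gen.b * FreeMonoid.of (Gen.y n))
      (FreeMonoid.of Gen.b * FreeMonoid.of (Gen.y (n + 1)))
  | cbx (n : ℤ) : RRel (FreeMonoid.of Gen.c * FreeMonoid.of Gen.b * FreeMonoid.of (Gen.x n))
      (FreeMonoid.of Gen.b * FreeMonoid.of (Gen.x (n + 1)))
  | cby (n : ℤ) : RRel (FreeMonoid.of Gen.c * FreeMonoid.of Gen.b * FreeMonoid.of (Gen.y n))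
      (FreeMonoid.of Gen.b * FreeMonoid.of (Gen.y n))
  | dbx (n : ℤ) (z : Gen) :
      RRel (FreeMonoid.of Gen.d * FreeMonoid.of Gen.b * FreeMonoid.of (Gen.x n) * FreeMonoid.of z)
        (FreeMonoid.of Gen.b * FreeMonoid.of (Gen.x n) * FreeMonoid.of z)
  | fby (n : ℤ) (z : Gen) :
      RRel (FreeMonoid.of Gen.f * FreeMonoid.of Gen.b * FreeMonoid.of (Gen.y n) * FreeMonoid.of z)
        (FreeMonoid.of Gen.b * FreeMonoid.of (Gen.y n) * FreeMonoid.of z)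

/-- The monoid `R`: the quotient of the free monoid on the generators by the congruence
generated by the defining relations. -/
def R : Type := (conGen RRel).Quotient

noncomputable instance : Monoid R := inferInstanceAs (Monoid (conGen RRel).Quotient)

/-- The quotient map from the free monoid on the generators onto `R`. -/
def qR : FreeMonoid Gen →* R := Con.mk' _

/-- The image in `R` of a generator. -/
noncomputable def gen (g : Gen) : R := qR (FreeMonoid.of g)

/-- A word contains a forbidden factor. -/
def IsForbidden (w : FreeMonoid Gen) : Prop :=
  ∃ n : ℤ,
    w = FreeMonoid.of Gen.a * FreeMonoid.of Gen.b * FreeMonoid.of (Gen.x n) ∨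
    w = FreeMonoid.of Gen.a * FreeMonoid.of Gen.b * FreeMonoid.of (Gen.y n) ∨
    w = FreeMonoid.of Gen.c * FreeMonoid.of Gen.b * FreeMonoid.of (Gen.x n) ∨
    w = FreeMonoid.of Gen.c * FreeMonoid.of Gen.b * FreeMonoid.of (Gen.y n) ∨
    w = FreeMonoid.of Gen.d * FreeMonoid.of Gen.b * FreeMonoid.of (Gen.x n) ∨
    w = FreeMonoid.of Gen.f * FreeMonoid.of Gen.b * FreeMonoid.of (Gen.y n)

/-- A word is reduced if it contains no forbidden factor. -/
def ReducedWord (u : FreeMonoid Gen) : Prop :=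
  ¬ ∃ p w s : FreeMonoid Gen, IsForbidden w ∧ u = p * w * s

/-- The prefix word `w₁ w₂ ⋯ wₙ` of an infinite word. -/
def prefixWord (w : ℕ → Gen) (n : ℕ) : FreeMonoid Gen :=
  FreeMonoid.ofList ((List.range n).map w)


/-!
`R` acts on words over its generators, each generator being prepended to a word unless one of the
defining relations absorbs it (`Gen.act`). The word that `r` produces from the empty word is a
normal form of `r`; in particular `R` is left cancellative.

Every element of `X = abR ∩ cbR` has the form `b xₙ u`, fixed by `λ_a`, or `b yₙ u`, fixed by
`λ_c`; on the other hand `λ_c` moves every point `b xₙ` of `X` and `λ_a` every point `b yₙ`.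
A generator acts on the words `A xₖ` and `A yₖ` alike, up to a shift of the index `k`. Hence each
element of the left inverse hull either is undefined at almost all points `b xₙ`, `b yₙ`, or
sends almost all of them to `A' xₙ₊ₛ`, `A' yₙ₊ₜ` with one common prefix `A'`. So a
constructible right ideal contains almost all or almost none of these points, and a set in `J̄(R)`
containing infinitely many `b xₙ` contains infinitely many `b yₙ` as well. In a cover of `X` as in
the definition of C*-regularity, a piece containing infinitely many `b xₙ` is therefore fixed
neither by `λ_a` nor by `λ_c`.
-/

open Filter

section LeftInverseHull

variable {M : Type*} [Monoid M]

theorem pinv_ptransl_eq_none_iff {r t : M} : pinv (ptransl r) t = none ↔ ¬ r ∣ t := by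
  simp [pinv, ptransl, Dvd.dvd, eq_comm]

theorem pinv_ptransl_eq_some_iff [IsLeftCancelMul M] {r t u : M} :
    pinv (ptransl r) t = some u ↔ r * u = t := by
  unfold pinv
  split_ifs with h
  · have hr : r * h.choose = t := Option.some_injective _ h.choose_spec
    refine ⟨fun hu => ?_, fun hu => ?_⟩
    · rwa [← Option.some_injective _ hu]
    · rw [mul_left_cancel (hr.trans hu.symm)]
  · exact ⟨nofun, fun hu => absurd ⟨u, congrArg some hu⟩ h⟩

theorem pinv_ptransl_one (t : M) : pinv (ptransl 1) t = some t := by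
  have h : ∃ u, ptransl 1 u = some t := ⟨t, by simp [ptransl]⟩
  rw [pinv, dif_pos h, ← one_mul h.choose]
  exact h.choose_spec

theorem inInvHull_ptransl (r : M) : InInvHull (ptransl r) :=
  ⟨[(r, 1)], by simp, funext fun s => (pinv_ptransl_one (r * s)).symm⟩

theorem isConstructible_dvd_and_dvd [IsLeftCancelMul M] (r r' : M) :
    IsConstructible {s | r ∣ s ∧ r' ∣ s} := by
  refine ⟨_, ⟨[(1, r), (r, r'), (r', 1)], by simp, rfl⟩, Set.ext fun s => ?_⟩
  change _ ↔ ((pinv (ptransl r) (1 * s)).bind fun u => pinv (ptransl r') (r * u)).bind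
    (fun v => pinv (ptransl 1) (r' * v)) ≠ none
  rw [one_mul]
  constructor
  · rintro ⟨⟨u, rfl⟩, ⟨v, hv⟩⟩
    rw [pinv_ptransl_eq_some_iff.2 rfl, Option.bind_some, pinv_ptransl_eq_some_iff.2 hv.symm,
      Option.bind_some, pinv_ptransl_one]
    exact Option.some_ne_none _
  · intro h
    rcases hu : pinv (ptransl r) s with _ | u
    · simp [hu] at h
    rcases hv : pinv (ptransl r') (r * u) with _ | v
    · simp [hu, hv] at h
    rw [pinv_ptransl_eq_some_iff] at hu
    rw [pinv_ptransl_eq_some_iff, hu] at hv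
    exact ⟨⟨u, hu.symm⟩, ⟨v, hv.symm⟩⟩

theorem IsConstructible.isConstructibleBar {X : Set M} (h : IsConstructible X) :
    IsConstructibleBar X :=
  ⟨X, 0, Fin.elim0, h, fun i => i.elim0, by simp⟩

end LeftInverseHull

inductive XY
  | x
  | y

def XY.letter : XY → ℤ → Gen
  | .x => Gen.x
  | .y => Gen.y

theorem XY.letter_injective (i : XY) : Function.Injective i.letter := by
  cases i <;> intro k k' h <;> cases h <;> rfl

namespace Gen

def act : Gen → List Gen → List Gen
  | a, b :: x k :: v => b :: x k :: v
  | a, b :: y k :: v => b :: y (k + 1) :: v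
  | c, b :: x k :: v => b :: x (k + 1) :: v
  | c, b :: y k :: v => b :: y k :: v
  | d, b :: x k :: z :: v => b :: x k :: z :: v
  | f, b :: y k :: z :: v => b :: y k :: z :: v
  | g, u => g :: u

def unact : Gen → List Gen → List Gen
  | a, b :: x k :: v => b :: x k :: v
  | a, b :: y k :: v => b :: y (k - 1) :: v
  | c, b :: x k :: v => b :: x (k - 1) :: v
  | c, b :: y k :: v => b :: y k :: v
  | d, b :: x k :: z :: v => b :: x k :: z :: v
  | f, b :: y k :: z :: v => b :: y k :: z :: v
  | _, u => u.tail

theorem unact_act (g : Gen) (u : List Gen) : unact g (act g u) = u := by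
  unfold act
  split <;> simp [unact]

theorem act_injective (g : Gen) : Function.Injective (act g) :=
  Function.LeftInverse.injective (unact_act g)

theorem act_ne_nil (g : Gen) (u : List Gen) : act g u ≠ [] := by
  unfold act
  split <;> simp

theorem head?_act_c_cons_b (u : List Gen) : (act c (b :: u)).head? ≠ some a := by
  unfold act
  split <;> simp_all

def side : Gen → Option XY
  | x _ => some .x
  | y _ => some .y
  | _ => none

theorem side_eq_some_iff {ℓ : Gen} {i : XY} : side ℓ = some i ↔ ∃ k, ℓ = i.letter k := by
  cases ℓ <;> cases i <;> simp [side, XY.letter]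

theorem getLast?_act_bind_side (g : Gen) {u : List Gen} (hu : u ≠ []) :
    (act g u).getLast?.bind side = u.getLast?.bind side := by
  obtain ⟨u₀, u, rfl⟩ := List.exists_cons_of_ne_nil hu
  unfold act
  split <;> simp_all only [ne_eq, reduceCtorEq, not_false_eq_true, List.cons.injEq, imp_false,
    not_and, List.getLast?_cons, Option.getD_some, Option.bind_some]
  all_goals
    generalize List.getLast? _ = o
    cases o <;> rfl

theorem act_append_of_not_absorbs (g : Gen) {A : List Gen} (ℓ : Gen)
    (hac : ¬ (A = [b] ∧ (g = a ∨ g = c)))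
    (hdf : ¬ ((g = d ∧ ∃ j, A = [b, x j]) ∨ (g = f ∧ ∃ j, A = [b, y j]))) :
    act g (A ++ [ℓ]) = act g A ++ [ℓ] := by
  cases g <;>
    rcases A with _ | ⟨_ | _ | _ | _ | _ | j | j, _ | ⟨_ | _ | _ | _ | _ | j' | j', _ | ⟨z, A⟩⟩⟩ <;>
    first | rfl | (cases ℓ <;> rfl) | simp at hac hdf

theorem act_append_letter (g : Gen) (A : List Gen) :
    ∃ (A' : List Gen) (s : XY → ℤ), ∀ (i : XY) k,
      act g (A ++ [i.letter k]) = A' ++ [i.letter (k + s i)] := by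
  by_cases hac : A = [b] ∧ (g = a ∨ g = c)
  · obtain ⟨rfl, rfl | rfl⟩ := hac
    · exact ⟨[b], fun | .x => 0 | .y => 1, fun i k => by cases i <;> simp [act, XY.letter]⟩
    · exact ⟨[b], fun | .x => 1 | .y => 0, fun i k => by cases i <;> simp [act, XY.letter]⟩
  by_cases hdf : (g = d ∧ ∃ j, A = [b, x j]) ∨ (g = f ∧ ∃ j, A = [b, y j])
  · refine ⟨A, 0, fun i k => ?_⟩
    rcases hdf with ⟨rfl, j, rfl⟩ | ⟨rfl, j, rfl⟩ <;> cases i <;> simp [act, XY.letter]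
  · exact ⟨act g A, 0, fun i k => by simp [act_append_of_not_absorbs g _ hac hdf]⟩

end Gen

theorem qR_ofList_act (g : Gen) (u : List Gen) :
    qR (FreeMonoid.ofList (g.act u)) = gen g * qR (FreeMonoid.ofList u) := by
  have rel {w₁ w₂ : FreeMonoid Gen} (h : RRel w₁ w₂) (v : List Gen) :
      conGen RRel (w₂ * FreeMonoid.ofList v) (w₁ * FreeMonoid.ofList v) :=
    ((conGen RRel).mul (ConGen.Rel.of _ _ h) ((conGen RRel).refl _)).symm
  rw [gen, ← map_mul]
  refine (Con.eq _).2 ?_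
  unfold Gen.act
  split
  · exact rel (.abx _) _
  · exact rel (.aby _) _
  · exact rel (.cbx _) _
  · exact rel (.cby _) _
  · exact rel (.dbx _ _) _
  · exact rel (.fby _ _) _
  · exact (conGen RRel).refl _

def wordAction : FreeMonoid Gen →* Function.End (List Gen) :=
  FreeMonoid.lift fun g => (g.act : Function.End (List Gen))

theorem conGen_le_ker_wordAction : conGen RRel ≤ Con.ker wordAction := by
  refine Con.conGen_le.2 fun u v huv => (Con.ker_rel _).2 ?_
  funext w
  cases huv with
  | dbx n z =>
    show Gen.d.act (Gen.b :: Gen.x n :: z.act w) = Gen.b :: Gen.x n :: z.act w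
    obtain ⟨z', v, h⟩ := List.exists_cons_of_ne_nil (z.act_ne_nil w)
    rw [h]
    rfl
  | fby n z =>
    show Gen.f.act (Gen.b :: Gen.y n :: z.act w) = Gen.b :: Gen.y n :: z.act w
    obtain ⟨z', v, h⟩ := List.exists_cons_of_ne_nil (z.act_ne_nil w)
    rw [h]
    rfl
  | _ => rfl

noncomputable def listAction : R →* Function.End (List Gen) :=
  (conGen RRel).lift wordAction conGen_le_ker_wordAction

theorem listAction_qR (w : FreeMonoid Gen) : listAction (qR w) = wordAction w :=
  Con.lift_mk' _ w

theorem listAction_one (u : List Gen) : listAction 1 u = u := by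
  rw [map_one]
  rfl

theorem listAction_gen (g : Gen) (u : List Gen) : listAction (gen g) u = g.act u := by
  rw [gen, listAction_qR]
  rfl

theorem listAction_gen_mul (g : Gen) (r : R) (u : List Gen) :
    listAction (gen g * r) u = g.act (listAction r u) := by
  rw [map_mul, ← listAction_gen]
  rfl

@[elab_as_elim]
theorem R.induction_on {P : R → Prop} (r : R) (one : P 1)
    (gen_mul : ∀ g r, P r → P (gen g * r)) : P r := by
  obtain ⟨w, rfl⟩ := Con.mk'_surjective (c := conGen RRel) r
  induction w using FreeMonoid.inductionOn' with
  | one => exact one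
  | of_mul g w ih => exact gen_mul g _ ih

theorem qR_ofList_listAction (r : R) (u : List Gen) :
    qR (FreeMonoid.ofList (listAction r u)) = r * qR (FreeMonoid.ofList u) := by
  induction r using R.induction_on with
  | one => rw [listAction_one, one_mul]
  | gen_mul g r ih => rw [listAction_gen_mul, qR_ofList_act, ih, mul_assoc]

theorem listAction_injective (r : R) : Function.Injective (listAction r) := by
  induction r using R.induction_on with
  | one => exact fun u v h => by rwa [listAction_one, listAction_one] at h
  | gen_mul g r ih =>
    refine fun u v h => ih (g.act_injective ?_)
    rwa [listAction_gen_mul, listAction_gen_mul] at h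

noncomputable def nf (r : R) : List Gen := listAction r []

theorem qR_nf (r : R) : qR (FreeMonoid.ofList (nf r)) = r := by
  rw [nf, qR_ofList_listAction]
  exact mul_one r

theorem nf_injective : Function.Injective nf :=
  Function.LeftInverse.injective qR_nf

theorem nf_mul (r r' : R) : nf (r * r') = listAction r (nf r') := by
  rw [nf, map_mul]
  rfl

theorem nf_gen (g : Gen) : nf (gen g) = [g] := by
  rw [nf, listAction_gen]
  cases g <;> rfl

theorem mul_eq_iff_listAction_nf {q u t : R} : q * u = t ↔ listAction q (nf u) = nf t := by
  rw [← nf_mul]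
  exact nf_injective.eq_iff.symm

instance : IsLeftCancelMul R where
  mul_left_cancel r u v h := by
    rw [mul_eq_iff_listAction_nf, nf_mul] at h
    exact nf_injective (listAction_injective r h)

theorem listAction_append_letter (r : R) (A : List Gen) :
    ∃ (A' : List Gen) (s : XY → ℤ), ∀ (i : XY) k,
      listAction r (A ++ [i.letter k]) = A' ++ [i.letter (k + s i)] := by
  induction r using R.induction_on with
  | one => exact ⟨A, 0, fun i k => by simp [listAction_one]⟩
  | gen_mul g r ih =>
    obtain ⟨A₁, s₁, h₁⟩ := ih
    obtain ⟨A₂, s₂, h₂⟩ := g.act_append_letter A₁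
    refine ⟨A₂, s₁ + s₂, fun i k => ?_⟩
    rw [listAction_gen_mul, h₁, h₂, Pi.add_apply, add_assoc]

theorem getLast?_listAction_bind_side (r : R) {u : List Gen} (hu : u ≠ []) :
    (listAction r u).getLast?.bind Gen.side = u.getLast?.bind Gen.side ∧
      listAction r u ≠ [] := by
  induction r using R.induction_on with
  | one => simpa [listAction_one]
  | gen_mul g r ih =>
    rw [listAction_gen_mul, Gen.getLast?_act_bind_side g ih.2]
    exact ⟨ih.1, g.act_ne_nil _⟩

theorem eq_append_letter_of_listAction_eq {r : R} {U A : List Gen} {i : XY} {k : ℤ}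
    (hU : U ≠ []) (h : listAction r U = A ++ [i.letter k]) :
    ∃ B k', U = B ++ [i.letter k'] := by
  have hside := (getLast?_listAction_bind_side r hU).1
  have hi : Gen.side (i.letter k) = some i := Gen.side_eq_some_iff.2 ⟨k, rfl⟩
  rw [h, List.getLast?_concat, Option.bind_some, hi, List.getLast?_eq_some_getLast hU,
    Option.bind_some, eq_comm, Gen.side_eq_some_iff] at hside
  obtain ⟨k', hk'⟩ := hside
  exact ⟨U.dropLast, k', by rw [← hk', List.dropLast_append_getLast]⟩

theorem listAction_preimage_dichotomy (r : R) (A : List Gen) :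
    (∃ (B : List Gen) (s : XY → ℤ), ∀ (i : XY) k,
      listAction r (B ++ [i.letter (k + s i)]) = A ++ [i.letter k]) ∨
    ∀ i : XY, {k | ∃ U, listAction r U = A ++ [i.letter k]}.Subsingleton := by
  by_cases h : ∃ (i : XY) (k : ℤ) (U : List Gen), U ≠ [] ∧ listAction r U = A ++ [i.letter k]
  · obtain ⟨i, k, U, hU, hUA⟩ := h
    obtain ⟨B, k', rfl⟩ := eq_append_letter_of_listAction_eq hU hUA
    obtain ⟨A', s, hs⟩ := listAction_append_letter r B
    rw [hs] at hUA
    obtain rfl := (List.append_inj' hUA rfl).1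
    exact Or.inl ⟨B, -s, fun j m => by rw [hs, Pi.neg_apply, neg_add_cancel_right]⟩
  · push Not at h
    have nil_of {i k U} (hU : listAction r U = A ++ [XY.letter i k]) : U = [] :=
      by_contra fun hne => h i k U hne hU
    refine Or.inr fun i k₁ ⟨U₁, h₁⟩ k₂ ⟨U₂, h₂⟩ => ?_
    rw [nil_of h₁] at h₁
    rw [nil_of h₂, h₁] at h₂
    exact i.letter_injective (List.append_cancel_left h₂ |> List.singleton_inj.1)

noncomputable def pt (i : XY) (n : ℤ) : R := gen Gen.b * gen (i.letter n)

theorem nf_pt (i : XY) (n : ℤ) : nf (pt i n) = [Gen.b, i.letter n] := by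
  rw [pt, nf_mul, nf_gen, listAction_gen]
  rfl

theorem pt_injective (i : XY) : Function.Injective (pt i) := fun n n' h => by
  simpa [nf_pt, i.letter_injective.eq_iff] using congrArg nf h

theorem map_nf_pinv_ptransl_of_listAction_eq {q t : R} {U : List Gen}
    (h : listAction q U = nf t) : (pinv (ptransl q) t).map nf = some U := by
  have hq : q * qR (FreeMonoid.ofList U) = t := by rw [← qR_ofList_listAction, h, qR_nf]
  rw [pinv_ptransl_eq_some_iff.2 hq, Option.map_some,
    listAction_injective q ((mul_eq_iff_listAction_nf.1 hq).trans h.symm)]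

def Tame (h : R → Option R) : Prop :=
  (∀ i, ∀ᶠ n in cofinite, h (pt i n) = none) ∨
  ∃ (A : List Gen) (s : XY → ℤ),
    ∀ i, ∀ᶠ n in cofinite, (h (pt i n)).map nf = some (A ++ [i.letter (n + s i)])

theorem tame_pid : Tame pid :=
  Or.inr ⟨[Gen.b], 0, fun i => Eventually.of_forall fun n => by simp [pid, nf_pt]⟩

theorem Tame.pcomp_pblock {h : R → Option R} (hh : Tame h) (p q : R) :
    Tame (pcomp (pblock (p, q)) h) := by
  rcases hh with hnone | ⟨A, s, hA⟩
  · exact Or.inl fun i => (hnone i).mono fun n hn => by simp [pcomp, hn]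
  obtain ⟨A₁, s₁, hp⟩ := listAction_append_letter p A
  have hmul {i n} (he : (h (pt i n)).map nf = some (A ++ [XY.letter i (n + s i)])) :
      ∃ e, h (pt i n) = some e ∧ nf (p * e) = A₁ ++ [XY.letter i (n + (s i + s₁ i))] := by
    obtain ⟨e, he, hne⟩ := Option.map_eq_some_iff.1 he
    exact ⟨e, he, by rw [nf_mul, hne, hp, add_assoc]⟩
  rcases listAction_preimage_dichotomy q A₁ with ⟨B, s₂, hq⟩ | hfin
  · refine Or.inr ⟨B, s + s₁ + s₂, fun i => (hA i).mono fun n hn => ?_⟩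
    obtain ⟨e, he, hpe⟩ := hmul hn
    simp only [pcomp, he, Option.bind_some]
    refine map_nf_pinv_ptransl_of_listAction_eq ((hq i _).trans hpe.symm) |>.trans ?_
    simp only [Pi.add_apply, add_assoc]
  · refine Or.inl fun i => ?_
    have hS := (add_left_injective (s i + s₁ i)).tendsto_cofinite.eventually
      (hfin i).finite.eventually_cofinite_notMem
    filter_upwards [hA i, hS] with n hn hnS
    obtain ⟨e, he, hpe⟩ := hmul hn
    simp only [pcomp, he, Option.bind_some]
    refine pinv_ptransl_eq_none_iff.2 fun ⟨u, hu⟩ => hnS ⟨nf u, ?_⟩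
    rw [← nf_mul, ← hu, hpe]

theorem tame_of_inInvHull {h : R → Option R} (hh : InInvHull h) : Tame h := by
  obtain ⟨l, -, rfl⟩ := hh
  suffices ∀ acc, Tame acc → Tame (l.foldl (fun acc p => pcomp (pblock p) acc) acc) from
    this _ tame_pid
  induction l with
  | nil => exact fun _ h => h
  | cons p l ih => exact fun acc hacc => ih _ (hacc.pcomp_pblock p.1 p.2)

theorem IsConstructible.eventually_pt_mem {Z : Set R} (hZ : IsConstructible Z) {i : XY}
    (hi : ∃ᶠ n in cofinite, pt i n ∈ Z) (j : XY) : ∀ᶠ n in cofinite, pt j n ∈ Z := by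
  obtain ⟨h, hh, rfl⟩ := hZ
  rcases tame_of_inInvHull hh with hnone | ⟨A, s, hA⟩
  · exact absurd ((hnone i).mono fun n hn hdom => hdom hn) hi
  · exact (hA j).mono fun n hn hnone => by simp [hnone] at hn

theorem IsConstructibleBar.frequently_pt_mem {Y : Set R} (hY : IsConstructibleBar Y) {i : XY}
    (hi : ∃ᶠ n in cofinite, pt i n ∈ Y) (j : XY) : ∃ᶠ n in cofinite, pt j n ∈ Y := by
  obtain ⟨Z, m, Zs, hZ, hZs, rfl⟩ := hY
  have hZj := hZ.eventually_pt_mem (hi.mono fun n hn => hn.1) j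
  by_contra hj
  rw [not_frequently] at hj
  have hcov : ∃ᶠ n in cofinite, ∃ k, pt j n ∈ Zs k :=
    (hZj.and hj).frequently.mono fun n ⟨hn, hnY⟩ =>
      Set.mem_iUnion.1 (by_contra fun h => hnY ⟨hn, h⟩)
  obtain ⟨k, hk⟩ := frequently_exists.1 hcov
  exact hi (((hZs k).eventually_pt_mem hk i).mono fun n hn hnY =>
    hnY.2 (Set.mem_iUnion.2 ⟨k, hn⟩))

def abR_inter_cbR : Set R := {s | gen Gen.a * gen Gen.b ∣ s ∧ gen Gen.c * gen Gen.b ∣ s}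

theorem pt_x_mem_abR_inter_cbR (n : ℤ) : pt .x n ∈ abR_inter_cbR := by
  refine ⟨⟨gen (.x n), nf_injective ?_⟩, ⟨gen (.x (n - 1)), nf_injective ?_⟩⟩ <;>
    rw [nf_pt, mul_assoc, nf_mul, nf_mul, nf_gen, listAction_gen, listAction_gen]
  · rfl
  · simp [Gen.act, XY.letter]

theorem gen_a_mul_pt_y (n : ℤ) : gen Gen.a * pt .y n = pt .y (n + 1) :=
  nf_injective (by rw [nf_mul, nf_pt, nf_pt, listAction_gen]; rfl)

theorem gen_c_mul_pt_x (n : ℤ) : gen Gen.c * pt .x n = pt .x (n + 1) :=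
  nf_injective (by rw [nf_mul, nf_pt, nf_pt, listAction_gen]; rfl)

theorem gen_a_mul_eq_or_gen_c_mul_eq_of_mem {s : R} (hs : s ∈ abR_inter_cbR) :
    gen Gen.a * s = s ∨ gen Gen.c * s = s := by
  obtain ⟨⟨u, rfl⟩, ⟨v, hv⟩⟩ := hs
  have hnf : nf (gen Gen.a * gen Gen.b * u) = Gen.a.act (Gen.b :: nf u) := by
    rw [mul_assoc, nf_mul, nf_mul, listAction_gen, listAction_gen]
    rfl
  have hnf' : nf (gen Gen.a * gen Gen.b * u) = Gen.c.act (Gen.b :: nf v) := by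
    rw [hv, mul_assoc, nf_mul, nf_mul, listAction_gen, listAction_gen]
    rfl
  rcases hu : nf u with _ | ⟨_ | _ | _ | _ | _ | k | k, w⟩
  case cons.x => exact Or.inl (nf_injective (by rw [nf_mul, hnf, listAction_gen, hu]; rfl))
  case cons.y => exact Or.inr (nf_injective (by rw [nf_mul, hnf, listAction_gen, hu]; rfl))
  all_goals
    refine absurd ?_ (Gen.head?_act_c_cons_b (nf v))
    rw [← hnf', hnf, hu]
    rfl

/-- The monoid `R` is not C*-regular. -/
theorem cstar_stmt15 : ¬ Regular R := by
  intro hreg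
  set h : Fin 2 → R → Option R := ![ptransl (gen Gen.a), ptransl (gen Gen.c)]
  have hcov : abR_inter_cbR ⊆ ⋃ k, {s | h k s = some s} := fun s hs => by
    rcases gen_a_mul_eq_or_gen_c_mul_eq_of_mem hs with hs | hs
    exacts [Set.mem_iUnion.2 ⟨0, by simp [h, ptransl, hs]⟩,
      Set.mem_iUnion.2 ⟨1, by simp [h, ptransl, hs]⟩]
  obtain ⟨l, Y, k, hY, hXY, hfix⟩ :=
    hreg 2 h (fun k => by fin_cases k <;> exact inInvHull_ptransl _) _
      (isConstructible_dvd_and_dvd _ _).isConstructibleBar ⟨_, pt_x_mem_abR_inter_cbR 0⟩ hcov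
  obtain ⟨j, hj⟩ : ∃ j, ∃ᶠ n in cofinite, pt .x n ∈ Y j :=
    frequently_exists.1 (Eventually.of_forall fun n =>
      Set.mem_iUnion.1 (hXY (pt_x_mem_abR_inter_cbR n))).frequently
  have hmove : ∀ t : Fin 2, ∃ i, ∀ n, h t (pt i n) ≠ some (pt i n) := by
    intro t
    fin_cases t
    · refine ⟨.y, fun n hn => (pt_injective .y).ne n.lt_succ.ne' ?_⟩
      simpa [h, ptransl, gen_a_mul_pt_y] using hn
    · refine ⟨.x, fun n hn => (pt_injective .x).ne n.lt_succ.ne' ?_⟩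
      simpa [h, ptransl, gen_c_mul_pt_x] using hn
  obtain ⟨i, hi⟩ := hmove (k j)
  obtain ⟨n, hn⟩ := ((hY j).frequently_pt_mem hj i).exists
  exact hi n (hfix j _ hn)

end SgC
end
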